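/- Let M be an o-minimal expansion of a real closed field, A ⊆ M^k definably compact, f : A → B definable continuous, x ∈ Sp(A), and y ∈ Sp(B) with y ≤ Sp(f)(x) in the specialization order. Then there exists z ∈ Sp(A) with z ≤ x and Sp(f)(z) = y; moreover if y < Sp(f)(x) then z < x. -/

import Mathlib

open FirstOrder Set Classical

/-- `Defin L M s` : the set `s ⊆ Mᵏ` is definable in the structure `M` with parameters from `M`. -/
def Defin (L : FirstOrder.Language) (M : Type) [L.Structure M] {k : ℕ}
    (s : Set (Fin k → M)) : Prop :=
  Set.Definable (Set.univ : Set M) L s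

/-- `M` is an o-minimal structure: the order is definable, and every definable subset of `M`
is a finite union of points and open intervals (possibly unbounded). -/
def IsOMin (L : FirstOrder.Language) (M : Type) [L.Structure M] [LinearOrder M] : Prop :=
  Set.Definable (Set.univ : Set M) L {p : Fin 2 → M | p 0 < p 1} ∧
  ∀ s : Set (Fin 1 → M), Defin L M s →
    ∃ (F : Finset M) (n : ℕ) (J : Fin n → Set M),
      (∀ i, (∃ a b, J i = Set.Ioo a b) ∨ (∃ a, J i = Set.Ioi a) ∨
            (∃ b, J i = Set.Iio b) ∨ J i = Set.univ) ∧
      (fun p : Fin 1 → M => p 0) '' s = ↑F ∪ ⋃ i, J i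

/-- `M` expands an ordered group: the graph of addition is definable. -/
def ExpandsGroup (L : FirstOrder.Language) (M : Type) [L.Structure M] [Add M] : Prop :=
  Set.Definable (Set.univ : Set M) L {p : Fin 3 → M | p 0 + p 1 = p 2}

/-- `M` expands a (real closed, by o-minimality) field: graphs of `+` and `*` are definable. -/
def ExpandsField (L : FirstOrder.Language) (M : Type) [L.Structure M] [Add M] [Mul M] : Prop :=
  Set.Definable (Set.univ : Set M) L {p : Fin 3 → M | p 0 + p 1 = p 2} ∧
  Set.Definable (Set.univ : Set M) L {p : Fin 3 → M | p 0 * p 1 = p 2}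

/-- o-minimal dimension of a subset of `Mᵏ` : the largest `d` such that some coordinate
projection onto `M^d` has nonempty interior; `-1` for the empty set. -/

noncomputable def odim {M : Type} [TopologicalSpace M] {k : ℕ} (s : Set (Fin k → M)) : ℤ :=
  if s.Nonempty then
    ((sSup {d : ℕ | ∃ f : Fin d → Fin k, Function.Injective f ∧
      (interior ((fun x : Fin k → M => x ∘ f) '' s)).Nonempty} : ℕ) : ℤ)
  else -1

/-- A point of the o-minimal spectrum `Sp A`: a complete type over `M` concentrated on `A`,
presented as an ultrafilter on the Boolean algebra of definable subsets of `A`. -/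
structure OType (L : FirstOrder.Language) (M : Type) [L.Structure M] {k : ℕ}
    (A : Set (Fin k → M)) where
  sets : Set (Set (Fin k → M))
  definable_mem : ∀ s ∈ sets, Defin L M s
  subset_mem : ∀ s ∈ sets, s ⊆ A
  top_mem : A ∈ sets
  nonempty_mem : ∀ s ∈ sets, s.Nonempty
  inter_mem : ∀ s ∈ sets, ∀ t ∈ sets, s ∩ t ∈ sets
  complete : ∀ s : Set (Fin k → M), Defin L M s → s ⊆ A → (s ∈ sets ∨ A \ s ∈ sets)

/-- The spectral topology on `Sp A`, generated by the sets `Sp U` for `U` open definable. -/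
instance OType.topology (L : FirstOrder.Language) (M : Type) [L.Structure M] [TopologicalSpace M]
    {k : ℕ} (A : Set (Fin k → M)) : TopologicalSpace (OType L M A) :=
  TopologicalSpace.generateFrom
    {V | ∃ U : Set (Fin k → M), IsOpen U ∧ Defin L M U ∧
      V = {x : OType L M A | U ∩ A ∈ x.sets}}

/-- The dimension of a type: the minimal dimension of a definable set on which it concentrates. -/
noncomputable def OType.tdim {L : FirstOrder.Language} {M : Type} [L.Structure M]
    [TopologicalSpace M] {k : ℕ} {A : Set (Fin k → M)} (x : OType L M A) : ℤ :=
  sInf {d : ℤ | ∃ s ∈ x.sets, odim s = d}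

/-- `F` is the map `Sp f : Sp A → Sp B` induced by the definable map `f : A → B`
(pushforward of types: `t ∈ Sp f (x)` iff `f⁻¹(t) ∈ x`). -/
def IsSpecMap (L : FirstOrder.Language) (M : Type) [L.Structure M] {k h : ℕ}
    (A : Set (Fin k → M)) (B : Set (Fin h → M)) (f : (Fin k → M) → (Fin h → M))
    (F : OType L M A → OType L M B) : Prop :=
  ∀ (x : OType L M A) (t : Set (Fin h → M)),
    t ∈ (F x).sets ↔ (Defin L M t ∧ t ⊆ B ∧ A ∩ f ⁻¹' t ∈ x.sets)

/-!
A specialization `y ⤳ Sp f (x)` is lifted by taking for `z` any type containing both every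
`A ∩ f⁻¹(t)` with `t ∈ y` and every closed definable `C ∩ A` with `C ∩ A ∈ x`: the first family
forces `Sp f (z) = y` and the second forces `x ⤳ z`. The two families meet because `f(C ∩ A)` is
closed, so it lies in `y` as soon as it lies in `Sp f (x)`. Closedness of such images is where
definable compactness enters: the image is a coordinate projection of the graph of `f`, and
projecting a closed bounded definable set along one coordinate keeps it closed, because by
o-minimality the set of heights `t` reached by points of `S` arbitrarily close over `b` is a
definable subset of `M` with an infimum `c`, and then `(b, c) ∈ S`.
-/

section Definability

variable {L : FirstOrder.Language} {M : Type} [L.Structure M] {α : Type*}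

theorem Set.DefinableFun.definableMap_pair {f g : (α → M) → M} (hf : univ.DefinableFun L f)
    (hg : univ.DefinableFun L g) : univ.DefinableMap L fun v => ![f v, g v] := by
  intro i
  fin_cases i <;> simpa

theorem Set.DefinableFun.add [Add M] (hgrp : ExpandsGroup L M) {f g : (α → M) → M}
    (hf : univ.DefinableFun L f) (hg : univ.DefinableFun L g) :
    univ.DefinableFun L fun v => f v + g v := by
  have hadd : univ.DefinableFun L fun v : Fin 2 → M => v 0 + v 1 := by
    simpa [DefinableFun, Function.tupleGraph] using!
      hgrp.preimage_comp (fun | 0 => some 0 | 1 => some 1 | 2 => none : Fin 3 → Option (Fin 2))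
  simpa using Set.DefinableFun.comp (hf.definableMap_pair hg) hadd

theorem Set.DefinableFun.definable_lt [LinearOrder M] (hmin : IsOMin L M) {f g : (α → M) → M}
    (hf : univ.DefinableFun L f) (hg : univ.DefinableFun L g) :
    univ.Definable L {v | f v < g v} := by
  simpa using hmin.1.preimage_map (hf.definableMap_pair hg)

theorem Set.DefinableFun.definable_le [LinearOrder M] (hmin : IsOMin L M) {f g : (α → M) → M}
    (hf : univ.DefinableFun L f) (hg : univ.DefinableFun L g) :
    univ.Definable L {v | f v ≤ g v} := by
  convert (hg.definable_lt hmin hf).compl using 1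
  ext
  simp

theorem definable_abs_sub_const_le [Field M] [LinearOrder M] [IsStrictOrderedRing M]
    (hmin : IsOMin L M) (hgrp : ExpandsGroup L M) (i : α) (c : M) {g : (α → M) → M}
    (hg : univ.DefinableFun L g) :
    univ.Definable L {w : α → M | |w i - c| ≤ g w} := by
  have hc : univ.DefinableFun L fun _ : α → M => c := L.definableFun_const α (mem_univ c)
  have hi := DefinableFun.proj L (A := (univ : Set M)) (i := i)
  convert ((hi.definable_le hmin (hc.add hgrp hg)).inter
    (hc.definable_le hmin (hi.add hgrp hg))) using 1
  ext w
  simp only [mem_ofPred_eq, mem_inter_iff, abs_sub_le_iff]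
  constructor <;> rintro ⟨h₁, h₂⟩ <;> constructor <;> linarith

end Definability

def DefinMap (L : FirstOrder.Language) (M : Type) [L.Structure M] {k h : ℕ}
    (f : (Fin k → M) → (Fin h → M)) : Prop :=
  Defin L M {p : Fin (k + h) → M | f (fun i => p (Fin.castAdd h i)) = fun j => p (Fin.natAdd k j)}

namespace DefinMap

variable {L : FirstOrder.Language} {M : Type} [L.Structure M] {k h : ℕ}
  {f : (Fin k → M) → (Fin h → M)}

theorem definable_graph (hf : DefinMap L M f) {γ : Type*} (a : Fin k → γ) (c : Fin h → γ) :
    univ.Definable L {w : γ → M | f (w ∘ a) = w ∘ c} := by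
  convert Set.Definable.preimage_comp (Fin.append a c) hf using 1
  ext w
  simp [Function.comp_def]

theorem defin_image (hf : DefinMap L M f) {S : Set (Fin k → M)} (hS : Defin L M S) :
    Defin L M (f '' S) := by
  unfold Defin
  convert ((hf.definable_graph Sum.inr Sum.inl).inter
    (Set.Definable.preimage_comp Sum.inr hS)).exists_of_finite using 1
  ext q
  simp [and_comm]

theorem defin_inter_preimage (hf : DefinMap L M f) {S : Set (Fin k → M)} (hS : Defin L M S)
    {t : Set (Fin h → M)} (ht : Defin L M t) : Defin L M (S ∩ f ⁻¹' t) := by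
  unfold Defin
  convert hS.inter ((hf.definable_graph Sum.inl Sum.inr).inter
    (Set.Definable.preimage_comp Sum.inr ht)).exists_of_finite using 1
  ext p
  simp

end DefinMap

section Boxes

open Filter Topology

variable {M : Type} [Field M] [LinearOrder M] [IsStrictOrderedRing M] [TopologicalSpace M]
  [OrderTopology M] {ι : Type*} [Finite ι]

theorem nhds_pi_basis_abs_sub_lt (q : ι → M) :
    (𝓝 q).HasBasis (fun ε : M => 0 < ε) fun ε => {p | ∀ i, |p i - q i| < ε} := by
  refine ⟨fun t => ⟨fun ht => ?_, fun ⟨ε, hε, hεt⟩ => mem_of_superset ?_ hεt⟩⟩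
  · obtain ⟨I, -, u, hu, hIu⟩ := Filter.mem_pi.1 (nhds_pi (a := q) ▸ ht)
    choose ε hε hεu using fun i => (nhds_basis_abs_sub_lt (q i)).mem_iff.1 (hu i)
    obtain ⟨δ, hδ, hδε⟩ : ∃ δ : M, 0 < δ ∧ ∀ i, δ < ε i :=
      (eventually_mem_nhdsWithin.and (eventually_all.2 fun i =>
        (eventually_lt_nhds (hε i)).filter_mono nhdsWithin_le_nhds)).exists (f := 𝓝[>] 0)
    exact ⟨δ, hδ, fun p hp => hIu fun i _ => hεu i ((hp i).trans (hδε i))⟩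
  · exact eventually_all.2 fun i =>
      (continuous_apply i).continuousAt.eventually (eventually_abs_sub_lt (q i) hε)

theorem mem_closure_iff_forall_abs_sub_lt {S : Set (ι → M)} {q : ι → M} :
    q ∈ closure S ↔ ∀ ε > 0, ∃ p ∈ S, ∀ i, |p i - q i| < ε :=
  mem_closure_iff_nhds_basis (nhds_pi_basis_abs_sub_lt q)

end Boxes

section DefinableCompleteness

variable {M : Type} [LinearOrder M]

def HasGLBOfBddBelow (s : Set M) : Prop :=
  s.Nonempty → BddBelow s → ∃ a, IsGLB s a

theorem HasGLBOfBddBelow.union {s t : Set M} (hs : HasGLBOfBddBelow s)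
    (ht : HasGLBOfBddBelow t) : HasGLBOfBddBelow (s ∪ t) := by
  intro hne hbdd
  rcases s.eq_empty_or_nonempty with rfl | hs'
  · simpa using ht (by simpa using hne) (by simpa using hbdd)
  rcases t.eq_empty_or_nonempty with rfl | ht'
  · simpa using hs hs' (by simpa using hbdd)
  obtain ⟨a, ha⟩ := hs hs' (hbdd.mono subset_union_left)
  obtain ⟨b, hb⟩ := ht ht' (hbdd.mono subset_union_right)
  exact ⟨a ⊓ b, ha.union hb⟩

theorem Set.Finite.hasGLBOfBddBelow {s : Set M} (hs : s.Finite) : HasGLBOfBddBelow s := by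
  intro hne _
  obtain ⟨a, ha, hmin⟩ := s.exists_min_image id hs hne
  exact ⟨a, IsLeast.isGLB ⟨ha, hmin⟩⟩

theorem hasGLBOfBddBelow_iUnion {ι : Type*} [Finite ι] {J : ι → Set M}
    (hJ : ∀ i, HasGLBOfBddBelow (J i)) : HasGLBOfBddBelow (⋃ i, J i) := by
  have := Fintype.ofFinite ι
  suffices ∀ t : Finset ι, HasGLBOfBddBelow (⋃ i ∈ t, J i) by simpa using this Finset.univ
  intro t
  induction t using Finset.induction_on with
  | empty => simpa using (Set.finite_empty (α := M)).hasGLBOfBddBelow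
  | insert i t _ ih => simpa [Finset.set_biUnion_insert] using (hJ i).union ih

variable [DenselyOrdered M] [NoMinOrder M]

theorem hasGLBOfBddBelow_of_openInterval {J : Set M}
    (hJ : (∃ a b, J = Ioo a b) ∨ (∃ a, J = Ioi a) ∨ (∃ b, J = Iio b) ∨ J = univ) :
    HasGLBOfBddBelow J := by
  rcases hJ with ⟨a, b, rfl⟩ | ⟨a, rfl⟩ | ⟨b, rfl⟩ | rfl
  · exact fun hne _ => ⟨a, isGLB_Ioo (nonempty_Ioo.1 hne)⟩
  · exact fun _ _ => ⟨a, isGLB_Ioi⟩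
  · exact fun _ hbdd => absurd hbdd (not_bddBelow_Iio b)
  · exact fun _ hbdd => absurd hbdd not_bddBelow_univ

theorem IsOMin.exists_isGLB {L : FirstOrder.Language} [L.Structure M] (hmin : IsOMin L M)
    {Z : Set M} (hZ : Defin L M {v : Fin 1 → M | v 0 ∈ Z}) (hne : Z.Nonempty)
    (hbdd : BddBelow Z) : ∃ c, IsGLB Z c := by
  obtain ⟨F, n, J, hJ, hZJ⟩ := hmin.2 _ hZ
  have hZ_eq : (fun v : Fin 1 → M => v 0) '' {v | v 0 ∈ Z} = Z :=
    Set.ext fun t => ⟨fun ⟨_, hv, hvt⟩ => hvt ▸ hv, fun ht => ⟨fun _ => t, ht, rfl⟩⟩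
  rw [hZ_eq] at hZJ
  rw [hZJ] at hne hbdd ⊢
  exact (F.finite_toSet.hasGLBOfBddBelow.union
    (hasGLBOfBddBelow_iUnion fun i => hasGLBOfBddBelow_of_openInterval (hJ i))) hne hbdd

end DefinableCompleteness

section ClosedProjection

variable {L : FirstOrder.Language} {M : Type} [L.Structure M] [Field M] [LinearOrder M]
  [IsStrictOrderedRing M]

def fiberUpperSet {n : ℕ} (S : Set (Fin (n + 1) → M)) (b : Fin n → M) : Set M :=
  {t | ∀ ε > 0, ∃ p ∈ S, (∀ i, |p i.castSucc - b i| ≤ ε) ∧ p (Fin.last n) ≤ t}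

theorem defin_fiberUpperSet (hmin : IsOMin L M) (hgrp : ExpandsGroup L M) {n : ℕ}
    {S : Set (Fin (n + 1) → M)} (hS : Defin L M S) (b : Fin n → M) :
    Defin L M {v : Fin 1 → M | v 0 ∈ fiberUpperSet S b} := by
  let W : Set ((Fin 1 ⊕ Fin 1) ⊕ Fin (n + 1) → M) :=
    {w | w ∘ Sum.inr ∈ S ∧ (∀ i, |w (.inr i.castSucc) - b i| ≤ w (.inl (.inr 0))) ∧
      w (.inr (Fin.last n)) ≤ w (.inl (.inl 0))}
  have hW : univ.Definable L W := by
    convert (Set.Definable.preimage_comp Sum.inr hS).inter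
      ((definable_iInter_of_finite fun i : Fin n => definable_abs_sub_const_le hmin hgrp
        (Sum.inr i.castSucc : (Fin 1 ⊕ Fin 1) ⊕ Fin (n + 1)) (b i)
        (DefinableFun.proj L (i := Sum.inl (Sum.inr 0)))).inter
      ((DefinableFun.proj L (i := Sum.inr (Fin.last n))).definable_le hmin
        (DefinableFun.proj L (i := Sum.inl (Sum.inl 0))))) using 1
    ext w
    simp [W]
  have hpos := (L.definableFun_const (Fin 1 ⊕ Fin 1) (mem_univ (0 : M))).definable_lt hmin
    (DefinableFun.proj L (i := Sum.inr 0))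
  unfold Defin
  convert (hpos.compl.union hW.exists_of_finite).forall_of_finite using 1
  ext v
  simp only [fiberUpperSet, W, mem_ofPred_eq, mem_union, mem_compl_iff, Sum.elim_inl, Sum.elim_inr,
    Sum.elim_comp_inr, not_lt]
  exact ⟨fun h u => (le_or_gt (u 0) 0).imp id (h (u 0)),
    fun h ε hε => (h fun _ => ε).resolve_left hε.not_ge⟩

variable [TopologicalSpace M] [OrderTopology M]

theorem IsOMin.isClosed_image_init (hmin : IsOMin L M) (hgrp : ExpandsGroup L M) {n : ℕ}
    {S : Set (Fin (n + 1) → M)} (hS : Defin L M S) (hScl : IsClosed S) {r : M}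
    (hr : ∀ p ∈ S, ∀ i, |p i| ≤ r) : IsClosed (Fin.init '' S) := by
  refine closure_subset_iff_isClosed.1 fun b hb => ?_
  rw [mem_closure_iff_forall_abs_sub_lt] at hb
  set Z := fiberUpperSet S b
  have hZ_up : ∀ t ∈ Z, ∀ t', t ≤ t' → t' ∈ Z := fun t ht t' htt' ε hε =>
    (ht ε hε).imp fun p ⟨hpS, hpb, hpt⟩ => ⟨hpS, hpb, hpt.trans htt'⟩
  have hrZ : r ∈ Z := fun ε hε => by
    obtain ⟨_, ⟨p, hpS, rfl⟩, hp⟩ := hb ε hε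
    exact ⟨p, hpS, fun i => (hp i).le, (le_abs_self _).trans (hr p hpS _)⟩
  have hZ_bdd : -r ∈ lowerBounds Z := fun t ht => by
    obtain ⟨p, hpS, -, hpt⟩ := ht 1 one_pos
    exact ((neg_le_neg (hr p hpS _)).trans (neg_abs_le _)).trans hpt
  obtain ⟨c, hc⟩ := hmin.exists_isGLB (defin_fiberUpperSet hmin hgrp hS b) ⟨r, hrZ⟩ ⟨-r, hZ_bdd⟩
  refine ⟨Fin.snoc b c, ?_, Fin.init_snoc _ _⟩
  rw [← hScl.closure_eq, mem_closure_iff_forall_abs_sub_lt]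
  intro ε hε
  have hbelow : c - ε / 2 ∉ Z := fun h => by linarith [hc.1 h]
  simp only [Z, fiberUpperSet, mem_ofPred_eq, not_forall, not_exists, not_and] at hbelow
  obtain ⟨ε', hε', hfar⟩ := hbelow
  obtain ⟨t, htZ, -, htc⟩ := hc.exists_between (lt_add_of_pos_right c (half_pos hε))
  obtain ⟨p, hpS, hpb, hpc⟩ := hZ_up t htZ _ htc.le (min (ε / 2) ε') (lt_min (half_pos hε) hε')
  have hpc' : c - ε / 2 < p (Fin.last n) :=
    not_le.1 (hfar p hpS fun i => (hpb i).trans (min_le_right _ _))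
  refine ⟨p, hpS, Fin.lastCases ?_ fun i => ?_⟩
  · rw [Fin.snoc_last, abs_sub_lt_iff]
    constructor <;> linarith
  · rw [Fin.snoc_castSucc]
    linarith [(hpb i).trans (min_le_left _ _)]

theorem IsOMin.isClosed_image_comp_castAdd (hmin : IsOMin L M) (hgrp : ExpandsGroup L M)
    {n : ℕ} : ∀ {m : ℕ} {S : Set (Fin (n + m) → M)}, Defin L M S → IsClosed S →
      ∀ {r : M}, (∀ p ∈ S, ∀ i, |p i| ≤ r) → IsClosed ((· ∘ Fin.castAdd m) '' S)
  | 0, S, _, hScl, _, _ => by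
    have hid : (fun p : Fin (n + 0) → M => p ∘ Fin.castAdd 0) = id := rfl
    rwa [hid, image_id]
  | m + 1, S, hS, hScl, r, hr => by
    have h := hmin.isClosed_image_comp_castAdd hgrp (Set.Definable.image_comp hS Fin.castSucc)
      (hmin.isClosed_image_init hgrp hS hScl hr) (r := r) (by
        rintro _ ⟨p, hp, rfl⟩ i
        exact hr p hp _)
    rwa [← image_comp] at h

end ClosedProjection

theorem IsOMin.isClosed_image {L : FirstOrder.Language} {M : Type} [L.Structure M] [Field M]
    [LinearOrder M] [IsStrictOrderedRing M] [TopologicalSpace M] [OrderTopology M]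
    (hmin : IsOMin L M) (hgrp : ExpandsGroup L M) {k h : ℕ} {f : (Fin k → M) → (Fin h → M)}
    (hf : DefinMap L M f) {S : Set (Fin k → M)} (hS : Defin L M S) (hScl : IsClosed S) {r : M}
    (hr : ∀ p ∈ S, ∀ i, |p i| ≤ r) (hcont : ContinuousOn f S) : IsClosed (f '' S) := by
  refine closure_subset_iff_isClosed.1 fun b hb => ?_
  -- cut `S` down to the part mapped near `b`, so that the graph of `f` over it is bounded
  set S' := S ∩ f ⁻¹' {q | ∀ j, |q j - b j| ≤ 1}
  have hS' : Defin L M S' := hf.defin_inter_preimage hS <| by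
    unfold Defin
    rw [ofPred_forall]
    exact definable_iInter_of_finite fun j =>
      definable_abs_sub_const_le hmin hgrp j (b j) (L.definableFun_const _ (mem_univ 1))
  have hS'cl : IsClosed S' := hcont.preimage_isClosed_of_isClosed hScl <| by
    rw [ofPred_forall]
    exact isClosed_iInter fun j =>
      isClosed_le ((continuous_apply j).sub continuous_const).abs continuous_const
  have hb' : b ∈ closure (f '' S') := by
    rw [mem_closure_iff_forall_abs_sub_lt] at hb ⊢
    intro ε hε
    obtain ⟨_, ⟨p, hpS, rfl⟩, hp⟩ := hb (min ε 1) (lt_min hε one_pos)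
    exact ⟨f p, ⟨p, ⟨hpS, fun j => (hp j).le.trans (min_le_right _ _)⟩, rfl⟩,
      fun j => (hp j).trans_le (min_le_left _ _)⟩
  set G : Set (Fin (h + k) → M) :=
    {w ∈ (· ∘ Fin.natAdd h) ⁻¹' S' | f (w ∘ Fin.natAdd h) = w ∘ Fin.castAdd k}
  have hG : Defin L M G :=
    (Set.Definable.preimage_comp (Fin.natAdd h) hS').inter (hf.definable_graph _ _)
  have hGcl : IsClosed G := by
    have hnat : Continuous fun w : Fin (h + k) → M => w ∘ Fin.natAdd h := by fun_prop
    exact (hS'cl.preimage hnat).isClosed_eq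
      ((hcont.mono inter_subset_left).comp hnat.continuousOn fun w hw => hw)
      (by fun_prop : Continuous fun w : Fin (h + k) → M => w ∘ Fin.castAdd k).continuousOn
  obtain ⟨R, hR⟩ : ∃ R, ∀ j, |b j| ≤ R := by
    obtain ⟨R, hR⟩ := (finite_range fun j => |b j|).bddAbove
    exact ⟨R, fun j => hR ⟨j, rfl⟩⟩
  have hGbd : ∀ w ∈ G, ∀ i, |w i| ≤ max r (R + 1) := by
    rintro w ⟨⟨hwS, hwb⟩, hwf⟩ i
    refine Fin.addCases (fun j => ?_) (fun j => (hr _ hwS j).trans (le_max_left _ _)) i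
    have hj : w (Fin.castAdd k j) = f (w ∘ Fin.natAdd h) j := congrFun hwf.symm j
    have := abs_sub_abs_le_abs_sub (w (Fin.castAdd k j)) (b j)
    have := hwb j
    rw [← hj] at this
    linarith [hR j, le_max_right r (R + 1)]
  have hGf : (· ∘ Fin.castAdd k) '' G = f '' S' := by
    ext q
    constructor
    · rintro ⟨w, ⟨hwS, hwf⟩, rfl⟩
      exact ⟨_, hwS, hwf⟩
    · rintro ⟨p, hp, rfl⟩
      have hnat : Fin.append (f p) p ∘ Fin.natAdd h = p := funext (Fin.append_right _ _)
      have hcast : Fin.append (f p) p ∘ Fin.castAdd k = f p := funext (Fin.append_left _ _)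
      exact ⟨Fin.append (f p) p, ⟨by rwa [mem_preimage, hnat], by rw [hnat, hcast]⟩, hcast⟩
  have hclosed := hmin.isClosed_image_comp_castAdd hgrp hG hGcl hGbd
  rw [hGf] at hclosed
  exact image_mono inter_subset_left (hclosed.closure_subset hb')

namespace OType

variable {L : FirstOrder.Language} {M : Type} [L.Structure M] {k : ℕ} {A : Set (Fin k → M)}

theorem defin_top (x : OType L M A) : Defin L M A :=
  x.definable_mem A x.top_mem

theorem eq_of_sets_subset {x z : OType L M A} (h : x.sets ⊆ z.sets) : x = z := by
  have hsets : x.sets = z.sets := by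
    refine h.antisymm fun s hs => ?_
    refine (x.complete s (z.definable_mem s hs) (z.subset_mem s hs)).resolve_right fun hx => ?_
    obtain ⟨p, hp, hp'⟩ := z.nonempty_mem _ (z.inter_mem _ hs _ (h hx))
    exact hp'.2 hp
  cases x
  cases z
  cases hsets
  rfl

theorem mem_of_superset (x : OType L M A) {s t : Set (Fin k → M)} (hs : s ∈ x.sets)
    (hst : s ⊆ t) (htA : t ⊆ A) (ht : Defin L M t) : t ∈ x.sets := by
  refine (x.complete t ht htA).resolve_right fun hx => ?_
  obtain ⟨p, hp, hp'⟩ := x.nonempty_mem _ (x.inter_mem _ hs _ hx)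
  exact hp'.2 (hst hp)

theorem compl_inter_mem_iff (x : OType L M A) {s : Set (Fin k → M)} (hs : Defin L M s) :
    sᶜ ∩ A ∈ x.sets ↔ s ∩ A ∉ x.sets := by
  refine ⟨fun hc h => ?_, fun h => ?_⟩
  · obtain ⟨p, hp, hp'⟩ := x.nonempty_mem _ (x.inter_mem _ hc _ h)
    exact hp.1 hp'.1
  · convert (x.complete _ (hs.inter x.defin_top) inter_subset_right).resolve_left h using 1
    ext p
    simp only [mem_inter_iff, mem_compl_iff, mem_sdiff]
    tauto

def ofUltrafilter (U : Ultrafilter (Fin k → M)) (hA : Defin L M A) (hAU : A ∈ U) :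
    OType L M A where
  sets := {s | Defin L M s ∧ s ⊆ A ∧ s ∈ U}
  definable_mem _ hs := hs.1
  subset_mem _ hs := hs.2.1
  top_mem := ⟨hA, subset_rfl, hAU⟩
  nonempty_mem _ hs := U.nonempty_of_mem hs.2.2
  inter_mem _ hs _ ht :=
    ⟨hs.1.inter ht.1, inter_subset_left.trans hs.2.1, Filter.inter_mem hs.2.2 ht.2.2⟩
  complete s hs hsA := (U.mem_or_compl_mem s).imp (fun h => ⟨hs, hsA, h⟩)
    fun h => ⟨hA.sdiff hs, sdiff_subset, Filter.inter_mem hAU h⟩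

theorem exists_sets_superset (hA : Defin L M A) {ℬ : Set (Set (Fin k → M))} (hℬ : ℬ.Nonempty)
    (hdef : ∀ s ∈ ℬ, Defin L M s) (hsub : ∀ s ∈ ℬ, s ⊆ A) (hne : ∀ s ∈ ℬ, s.Nonempty)
    (hinter : ∀ s ∈ ℬ, ∀ t ∈ ℬ, s ∩ t ∈ ℬ) : ∃ z : OType L M A, ℬ ⊆ z.sets := by
  let basis : FilterBasis (Fin k → M) :=
    ⟨ℬ, hℬ, fun hs ht => ⟨_, hinter _ hs _ ht, subset_rfl⟩⟩
  have : basis.filter.NeBot := basis.hasBasis.neBot_iff.2 fun hs => hne _ hs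
  have hU : ∀ s ∈ ℬ, s ∈ Ultrafilter.of basis.filter := fun s hs =>
    Ultrafilter.of_le _ (basis.mem_filter_of_mem hs)
  obtain ⟨s₀, hs₀⟩ := hℬ
  exact ⟨ofUltrafilter _ hA (Filter.mem_of_superset (hU s₀ hs₀) (hsub s₀ hs₀)),
    fun s hs => ⟨hdef s hs, hsub s hs, hU s hs⟩⟩

variable [TopologicalSpace M]

theorem mem_closure_singleton_iff_isOpen {x z : OType L M A} :
    z ∈ closure {x} ↔
      ∀ U : Set (Fin k → M), IsOpen U → Defin L M U → U ∩ A ∈ z.sets → U ∩ A ∈ x.sets := by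
  rw [← specializes_iff_mem_closure, specializes_iff_forall_open]
  refine ⟨fun h U hU hUdef =>
    h _ (TopologicalSpace.isOpen_generateFrom_of_mem ⟨U, hU, hUdef, rfl⟩), fun h O hO => ?_⟩
  induction hO with
  | basic V hV =>
    obtain ⟨U, hU, hUdef, rfl⟩ := hV
    exact h U hU hUdef
  | univ => exact fun _ => trivial
  | inter _ _ _ _ ih₁ ih₂ => exact fun hz => ⟨ih₁ hz.1, ih₂ hz.2⟩
  | sUnion _ _ ih => exact fun ⟨V, hV, hzV⟩ => ⟨V, hV, ih V hV hzV⟩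

theorem mem_closure_singleton_iff {x z : OType L M A} :
    z ∈ closure {x} ↔
      ∀ C : Set (Fin k → M), IsClosed C → Defin L M C → C ∩ A ∈ x.sets → C ∩ A ∈ z.sets := by
  rw [mem_closure_singleton_iff_isOpen]
  refine ⟨fun h C hC hCdef hx => ?_, fun h U hU hUdef hz => ?_⟩
  · by_contra hz
    exact (x.compl_inter_mem_iff hCdef).1
      (h _ hC.isOpen_compl hCdef.compl ((z.compl_inter_mem_iff hCdef).2 hz)) hx
  · by_contra hx
    have := h _ hU.isClosed_compl hUdef.compl ((x.compl_inter_mem_iff hUdef).2 hx)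
    exact (z.compl_inter_mem_iff hUdef).1 this hz

end OType

namespace IsSpecMap

variable {L : FirstOrder.Language} {M : Type} [L.Structure M] [TopologicalSpace M] {k h : ℕ}
  {A : Set (Fin k → M)} {B : Set (Fin h → M)} {f : (Fin k → M) → (Fin h → M)}
  {F : OType L M A → OType L M B}

theorem inter_preimage_inter_nonempty (hF : IsSpecMap L M A B f F) (hf : DefinMap L M f)
    (hclosed : ∀ C, IsClosed C → Defin L M C → IsClosed (f '' (C ∩ A)))
    {x : OType L M A} {y : OType L M B} (hy : y ∈ closure {F x}) {t : Set (Fin h → M)}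
    (ht : t ∈ y.sets) {C : Set (Fin k → M)} (hC : IsClosed C) (hCdef : Defin L M C)
    (hCx : C ∩ A ∈ x.sets) : (A ∩ f ⁻¹' t ∩ C).Nonempty := by
  set D := f '' (C ∩ A)
  have hDdef : Defin L M D := hf.defin_image (hCdef.inter x.defin_top)
  have hDBdef : Defin L M (D ∩ B) := hDdef.inter y.defin_top
  have hDFx : D ∩ B ∈ (F x).sets := by
    refine (hF x _).2 ⟨hDBdef, inter_subset_right, x.mem_of_superset
      (x.inter_mem _ hCx _ ((hF x B).1 (F x).top_mem).2.2) ?_ inter_subset_left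
      (hf.defin_inter_preimage x.defin_top hDBdef)⟩
    exact fun p hp => ⟨hp.1.2, ⟨p, hp.1, rfl⟩, hp.2.2⟩
  have hDy : D ∩ B ∈ y.sets :=
    OType.mem_closure_singleton_iff.1 hy D (hclosed C hC hCdef) hDdef hDFx
  obtain ⟨_, hqt, ⟨p, hp, rfl⟩, -⟩ := y.nonempty_mem _ (y.inter_mem _ ht _ hDy)
  exact ⟨p, ⟨hp.2, hqt⟩, hp.1⟩

theorem exists_mem_closure_eq (hF : IsSpecMap L M A B f F) (hf : DefinMap L M f)
    (hclosed : ∀ C, IsClosed C → Defin L M C → IsClosed (f '' (C ∩ A)))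
    {x : OType L M A} {y : OType L M B} (hy : y ∈ closure {F x}) :
    ∃ z ∈ closure {x}, F z = y := by
  have hA := x.defin_top
  let ℬ : Set (Set (Fin k → M)) := {s | ∃ t ∈ y.sets, ∃ C, IsClosed C ∧ Defin L M C ∧
    C ∩ A ∈ x.sets ∧ s = A ∩ f ⁻¹' t ∩ C}
  have hℬ : ∀ t ∈ y.sets, A ∩ f ⁻¹' t ∈ ℬ := fun t ht =>
    ⟨t, ht, univ, isClosed_univ, definable_univ, by simpa using x.top_mem, (inter_univ _).symm⟩
  obtain ⟨z, hz⟩ := OType.exists_sets_superset hA ⟨_, hℬ B y.top_mem⟩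
    (by rintro _ ⟨t, ht, C, -, hCdef, -, rfl⟩
        exact (hf.defin_inter_preimage hA (y.definable_mem t ht)).inter hCdef)
    (by rintro _ ⟨t, -, C, -, -, -, rfl⟩
        exact inter_subset_left.trans inter_subset_left)
    (by rintro _ ⟨t, ht, C, hC, hCdef, hCx, rfl⟩
        exact hF.inter_preimage_inter_nonempty hf hclosed hy ht hC hCdef hCx)
    (by rintro _ ⟨t₁, ht₁, C₁, hC₁, hC₁def, hC₁x, rfl⟩ _ ⟨t₂, ht₂, C₂, hC₂, hC₂def, hC₂x, rfl⟩
        refine ⟨t₁ ∩ t₂, y.inter_mem _ ht₁ _ ht₂, C₁ ∩ C₂, hC₁.inter hC₂, hC₁def.inter hC₂def,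
          ?_, ?_⟩
        · convert x.inter_mem _ hC₁x _ hC₂x using 1
          ext
          simp only [mem_inter_iff]
          tauto
        · ext
          simp only [mem_inter_iff, mem_preimage]
          tauto)
  refine ⟨z, OType.mem_closure_singleton_iff.2 fun C hC hCdef hCx => ?_,
    (OType.eq_of_sets_subset fun t ht => ?_).symm⟩
  · exact z.mem_of_superset (hz ⟨B, y.top_mem, C, hC, hCdef, hCx, rfl⟩)
      (fun p hp => ⟨hp.2, hp.1.1⟩) inter_subset_right (hCdef.inter hA)
  · exact (hF z t).2 ⟨y.definable_mem t ht, y.subset_mem t ht, hz (hℬ t ht)⟩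

end IsSpecMap

theorem stmt19_general {L : FirstOrder.Language} {M : Type} [L.Structure M]
    [Field M] [LinearOrder M] [IsStrictOrderedRing M] [TopologicalSpace M] [OrderTopology M]
    (hmin : IsOMin L M) (hfld : ExpandsField L M)
    {k h : ℕ} (A : Set (Fin k → M)) (B : Set (Fin h → M))
    (hA : Defin L M A) (hAcl : IsClosed A) (hAbd : ∃ r : M, ∀ p ∈ A, ∀ i, |p i| ≤ r)
    (f : (Fin k → M) → (Fin h → M))
    (hfdef : Defin L M
      {p : Fin (k + h) → M |
        f (fun i => p (Fin.castAdd h i)) = fun j => p (Fin.natAdd k j)})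
    (hcont : ContinuousOn f A)
    (F : OType L M A → OType L M B) (hF : IsSpecMap L M A B f F)
    (x : OType L M A) (y : OType L M B)
    (hy : y ∈ closure ({F x} : Set (OType L M B))) :
    ∃ z : OType L M A, z ∈ closure ({x} : Set (OType L M A)) ∧ F z = y ∧
      (y ≠ F x → z ≠ x) := by
  obtain ⟨r, hr⟩ := hAbd
  have hclosed : ∀ C, IsClosed C → Defin L M C → IsClosed (f '' (C ∩ A)) :=
    fun C hC hCdef => hmin.isClosed_image hfld.1 hfdef (hCdef.inter hA) (hC.inter hAcl)
      (fun p hp => hr p hp.2) (hcont.mono inter_subset_right)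
  obtain ⟨z, hzx, hFz⟩ := hF.exists_mem_closure_eq hfdef hclosed hy
  exact ⟨z, hzx, hFz, fun hyx hzx => hyx (hzx ▸ hFz.symm)⟩

/-- Let `M` be an o-minimal expansion of a real closed field, `A ⊆ Mᵏ` definably compact,
`f : A → B` definable continuous, `x ∈ Sp A`, and `y ∈ Sp B` with `y ≤ Sp f (x)` in the
specialization order. Then there is `z ∈ Sp A` with `z ≤ x` and `Sp f (z) = y`; moreover if
`y < Sp f (x)` then `z < x`. -/
theorem stmt19 {L : FirstOrder.Language} {M : Type} [L.Structure M]
    [Field M] [LinearOrder M] [IsStrictOrderedRing M] [TopologicalSpace M] [OrderTopology M]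
    (hmin : IsOMin L M) (hfld : ExpandsField L M)
    {k h : ℕ} (A : Set (Fin k → M)) (B : Set (Fin h → M))
    (hA : Defin L M A) (hAcl : IsClosed A) (hAbd : ∃ r : M, ∀ p ∈ A, ∀ i, |p i| ≤ r)
    (hB : Defin L M B)
    (f : (Fin k → M) → (Fin h → M))
    (hfdef : Defin L M
      {p : Fin (k + h) → M |
        f (fun i => p (Fin.castAdd h i)) = fun j => p (Fin.natAdd k j)})
    (hmap : Set.MapsTo f A B) (hcont : ContinuousOn f A)
    (F : OType L M A → OType L M B) (hF : IsSpecMap L M A B f F)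
    (x : OType L M A) (y : OType L M B)
    (hy : y ∈ closure ({F x} : Set (OType L M B))) :
    ∃ z : OType L M A, z ∈ closure ({x} : Set (OType L M A)) ∧ F z = y ∧
      (y ≠ F x → z ≠ x) :=
  stmt19_general hmin hfld A B hA hAcl hAbd f hfdef hcont F hF x y hy
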